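/- arXiv:1910.03893 — 2 statements merged into one kernel-verified Lean document; each statement's English description precedes it below -/
import Mathlib

section
/- Let Ω ⊆ ℝⁿ and let φ, ψ ∈ Φ_w(Ω) be generalized weak Φ-functions with φ ≃ ψ. If φ satisfies (A1)_Ω, then ψ satisfies (A1)_Ω (with a possibly different constant β). In other words, the condition (A1)_Ω is invariant under equivalence of generalized weak Φ-functions. -/
open MeasureTheory ENNReal Metric Set Filter NNReal

noncomputable section

/-- The left-inverse `φ⁻¹(τ) = inf {t ≥ 0 : φ(t) ≥ τ}` of `φ : [0,∞) → [0,∞]`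
(the infimum of the empty set being `∞`). -/
def leftInv (φ : ℝ≥0 → ℝ≥0∞) (τ : ℝ≥0∞) : ℝ≥0∞ :=
  ⨅ t : {t : ℝ≥0 // τ ≤ φ t}, (t : ℝ≥0∞)

/-- `(aInc)_p` with almost-increasing constant `a`: `t ↦ φ(t)/t^p` is almost increasing. -/
def AIncOn (φ : ℝ≥0 → ℝ≥0∞) (p : ℝ) (a : ℝ≥0∞) : Prop :=
  ∀ s t : ℝ≥0, 0 < s → s < t → φ s / (s : ℝ≥0∞) ^ p ≤ a * (φ t / (t : ℝ≥0∞) ^ p)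

/-- `(aDec)_q` with almost-decreasing constant `a`: `t ↦ φ(t)/t^q` is almost decreasing. -/
def ADecOn (φ : ℝ≥0 → ℝ≥0∞) (q : ℝ) (a : ℝ≥0∞) : Prop :=
  ∀ s t : ℝ≥0, 0 < s → s < t → φ t / (t : ℝ≥0∞) ^ q ≤ a * (φ s / (s : ℝ≥0∞) ^ q)

/-- A weak Φ-function with almost-increasing constant `a` for `t ↦ φ(t)/t`. -/
def IsWeakPhiWith (a : ℝ≥0∞) (φ : ℝ≥0 → ℝ≥0∞) : Prop :=
  Monotone φ ∧ φ 0 = 0 ∧ Tendsto φ (nhdsWithin 0 (Set.Ioi 0)) (nhds 0) ∧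
    Tendsto φ atTop (nhds ∞) ∧ 1 ≤ a ∧ AIncOn φ 1 a

/-- A weak Φ-function. -/
def IsWeakPhi (φ : ℝ≥0 → ℝ≥0∞) : Prop := ∃ a : ℝ≥0∞, IsWeakPhiWith a φ

/-- Euclidean space `ℝⁿ`. -/
abbrev En (n : ℕ) := EuclideanSpace ℝ (Fin n)

/-- A generalized weak Φ-function on `Ω ⊆ ℝⁿ`: `x ↦ φ(x,|f(x)|)` is measurable for
measurable `f`, and `φ(y,·)` is a weak Φ-function for a.e. `y ∈ Ω` with the
almost-increasing constant independent of `y`. -/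
def IsGenWeakPhi {n : ℕ} (Ω : Set (En n)) (φ : En n → ℝ≥0 → ℝ≥0∞) : Prop :=
  (∀ f : En n → ℝ≥0, Measurable f → Measurable fun x : Ω => φ x (f x)) ∧
  ∃ a : ℝ≥0∞, ∀ᵐ y ∂(volume.restrict Ω), IsWeakPhiWith a (φ y)

/-- Condition (A0) with constant `β`. -/
def A0With {n : ℕ} (β : ℝ) (Ω : Set (En n)) (φ : En n → ℝ≥0 → ℝ≥0∞) : Prop :=
  ∀ᵐ x ∂(volume.restrict Ω),
    ENNReal.ofReal β ≤ leftInv (φ x) 1 ∧ leftInv (φ x) 1 ≤ ENNReal.ofReal (1 / β)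

/-- Condition (A0). -/
def A0 {n : ℕ} (Ω : Set (En n)) (φ : En n → ℝ≥0 → ℝ≥0∞) : Prop :=
  ∃ β : ℝ, 0 < β ∧ β ≤ 1 ∧ A0With β Ω φ

/-- Condition (A1) with constant `β`. -/
def A1With {n : ℕ} (β : ℝ) (Ω : Set (En n)) (φ : En n → ℝ≥0 → ℝ≥0∞) : Prop :=
  ∀ (z : En n) (r : ℝ), 0 < r → volume (Metric.ball z r) ≤ 1 →
    ∀ᵐ x ∂(volume.restrict (Metric.ball z r ∩ Ω)),
      ∀ᵐ y ∂(volume.restrict (Metric.ball z r ∩ Ω)),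
        ∀ t : ℝ, 1 ≤ t → ENNReal.ofReal t ≤ (volume (Metric.ball z r))⁻¹ →
          ENNReal.ofReal β * leftInv (φ x) (ENNReal.ofReal t)
            ≤ leftInv (φ y) (ENNReal.ofReal t)

/-- Condition (A1). -/
def A1 {n : ℕ} (Ω : Set (En n)) (φ : En n → ℝ≥0 → ℝ≥0∞) : Prop :=
  ∃ β : ℝ, 0 < β ∧ β < 1 ∧ A1With β Ω φ

/-- Condition (A2). -/
def A2 {n : ℕ} (Ω : Set (En n)) (φ : En n → ℝ≥0 → ℝ≥0∞) : Prop :=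
  ∀ s : ℝ, 0 < s → ∃ (β : ℝ) (h : En n → ℝ), 0 < β ∧ β ≤ 1 ∧
    MemLp h 1 (volume.restrict Ω) ∧ MemLp h ⊤ (volume.restrict Ω) ∧
    ∀ᵐ x ∂(volume.restrict Ω), ∀ᵐ y ∂(volume.restrict Ω),
      ∀ t : ℝ, h x + h y ≤ t → t ≤ s →
        ENNReal.ofReal β * leftInv (φ x) (ENNReal.ofReal t)
          ≤ leftInv (φ y) (ENNReal.ofReal t)

/-- Condition (A1)_Ω with constant `β`:
`β^(|x−y| t^(1/n) + 1) φ⁻¹(y,t) ≤ φ⁻¹(x,t)` for all `x, y ∈ Ω` and `t ≥ 1`. -/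
def A1OmegaWith {n : ℕ} (β : ℝ) (Ω : Set (En n)) (φ : En n → ℝ≥0 → ℝ≥0∞) : Prop :=
  ∀ x ∈ Ω, ∀ y ∈ Ω, ∀ t : ℝ, 1 ≤ t →
    ENNReal.ofReal (β ^ (dist x y * t ^ ((1 : ℝ) / n) + 1)) *
        leftInv (φ y) (ENNReal.ofReal t)
      ≤ leftInv (φ x) (ENNReal.ofReal t)

/-- Condition (A1)_Ω. -/
def A1Omega {n : ℕ} (Ω : Set (En n)) (φ : En n → ℝ≥0 → ℝ≥0∞) : Prop :=
  ∃ β : ℝ, 0 < β ∧ β ≤ 1 ∧ A1OmegaWith β Ω φ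

/-- Equivalence `φ ≃ ψ` of generalized Φ-functions on `Ω`. -/
def PhiEquivOn {n : ℕ} (Ω : Set (En n)) (φ ψ : En n → ℝ≥0 → ℝ≥0∞) : Prop :=
  ∃ L : ℝ≥0, 1 ≤ L ∧ ∀ x ∈ Ω, ∀ t : ℝ≥0, φ x (t / L) ≤ ψ x t ∧ ψ x t ≤ φ x (L * t)

lemma leftInv_le_mul_leftInv_of_le_comp_mul {φ ψ : ℝ≥0 → ℝ≥0∞} {c : ℝ≥0} (hc : c ≠ 0)
    (h : ∀ t, ψ t ≤ φ (c * t)) (τ : ℝ≥0∞) :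
    leftInv φ τ ≤ c * leftInv ψ τ := by
  rw [leftInv, leftInv, ENNReal.mul_iInf_of_ne (by exact_mod_cast hc) coe_ne_top]
  exact le_iInf fun ⟨t, ht⟩ => iInf_le_of_le ⟨c * t, ht.trans (h t)⟩ (by push_cast; rfl)

lemma div_rpow_mul_le_rpow {β c e : ℝ} (hβ : 0 ≤ β) (hc : 1 ≤ c) (he : 1 ≤ e) :
    (β / c) ^ e * c ≤ β ^ e := by
  rw [Real.div_rpow hβ (by linarith), div_mul_eq_mul_div, div_le_iff₀ (by positivity)]
  exact mul_le_mul_of_nonneg_left (Real.self_le_rpow_of_one_le hc he) (Real.rpow_nonneg hβ e)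

/-- The exponent `|x−y| t^{1/n} + 1` is at least `1`, so the factor `L²` lost by passing
through the comparable left-inverses can be absorbed into the base `β`. -/
lemma A1OmegaWith.of_leftInv_le_mul {n : ℕ} {Ω : Set (En n)} {φ ψ : En n → ℝ≥0 → ℝ≥0∞}
    {β : ℝ} {L : ℝ≥0} (hβ : 0 ≤ β) (hL : 1 ≤ L)
    (hφψ : ∀ x ∈ Ω, ∀ τ, leftInv (φ x) τ ≤ L * leftInv (ψ x) τ)
    (hψφ : ∀ x ∈ Ω, ∀ τ, leftInv (ψ x) τ ≤ L * leftInv (φ x) τ)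
    (h : A1OmegaWith β Ω φ) : A1OmegaWith (β / (L : ℝ) ^ 2) Ω ψ := by
  intro x hx y hy t ht
  set τ := ENNReal.ofReal t
  set e := dist x y * t ^ ((1 : ℝ) / n) + 1
  have he : 1 ≤ e :=
    le_add_of_nonneg_left (mul_nonneg dist_nonneg (Real.rpow_nonneg (by linarith) _))
  have hL' : (1 : ℝ) ≤ (L : ℝ) ^ 2 := one_le_pow₀ (by exact_mod_cast hL)
  have hconst : ENNReal.ofReal ((β / (L : ℝ) ^ 2) ^ e) * (L : ℝ≥0∞) ^ 2
      ≤ ENNReal.ofReal (β ^ e) := by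
    rw [← ENNReal.ofReal_coe_nnreal, ← ENNReal.ofReal_pow L.coe_nonneg,
      ← ENNReal.ofReal_mul (Real.rpow_nonneg (by positivity) e)]
    exact ENNReal.ofReal_le_ofReal (div_rpow_mul_le_rpow hβ hL' he)
  have hL0 : (L : ℝ≥0∞) ≠ 0 := by exact_mod_cast (zero_lt_one.trans_le hL).ne'
  rw [← ENNReal.mul_le_mul_iff_right hL0 coe_ne_top]
  calc (L : ℝ≥0∞) * (ENNReal.ofReal ((β / (L : ℝ) ^ 2) ^ e) * leftInv (ψ y) τ)
      ≤ (L : ℝ≥0∞) * (ENNReal.ofReal ((β / (L : ℝ) ^ 2) ^ e) * (L * leftInv (φ y) τ)) := by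
        gcongr; exact hψφ y hy τ
    _ = ENNReal.ofReal ((β / (L : ℝ) ^ 2) ^ e) * (L : ℝ≥0∞) ^ 2 * leftInv (φ y) τ := by ring
    _ ≤ ENNReal.ofReal (β ^ e) * leftInv (φ y) τ := by gcongr
    _ ≤ leftInv (φ x) τ := h x hx y hy t ht
    _ ≤ L * leftInv (ψ x) τ := hφψ x hx τ

theorem a1Omega_invariant_under_equivalence_general {n : ℕ} (Ω : Set (En n))
    (φ ψ : En n → ℝ≥0 → ℝ≥0∞)
    (hequiv : PhiEquivOn Ω φ ψ) (hA1Ω : A1Omega Ω φ) :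
    A1Omega Ω ψ := by
  obtain ⟨β, hβ0, hβ1, hA⟩ := hA1Ω
  obtain ⟨L, hL1, hL⟩ := hequiv
  have hL0 : L ≠ 0 := (zero_lt_one.trans_le hL1).ne'
  have hL1' : (1 : ℝ) ≤ (L : ℝ) ^ 2 := one_le_pow₀ (by exact_mod_cast hL1)
  have hφψ : ∀ x ∈ Ω, ∀ τ, leftInv (φ x) τ ≤ L * leftInv (ψ x) τ := fun x hx =>
    leftInv_le_mul_leftInv_of_le_comp_mul hL0 fun t => (hL x hx t).2
  have hψφ : ∀ x ∈ Ω, ∀ τ, leftInv (ψ x) τ ≤ L * leftInv (φ x) τ := fun x hx =>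
    leftInv_le_mul_leftInv_of_le_comp_mul hL0 fun t => by
      simpa only [mul_div_cancel_left₀ t hL0] using (hL x hx (L * t)).1
  exact ⟨β / (L : ℝ) ^ 2, by positivity, div_le_one_of_le₀ (hβ1.trans hL1') (by positivity),
    hA.of_leftInv_le_mul hβ0.le hL1 hφψ hψφ⟩

/-- (A1)_Ω is invariant under equivalence of generalized weak Φ-functions. -/
theorem a1Omega_invariant_under_equivalence {n : ℕ} (Ω : Set (En n))
    (φ ψ : En n → ℝ≥0 → ℝ≥0∞) (hφ : IsGenWeakPhi Ω φ) (hψ : IsGenWeakPhi Ω ψ)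
    (hequiv : PhiEquivOn Ω φ ψ) (hA1Ω : A1Omega Ω φ) :
    A1Omega Ω ψ :=
  a1Omega_invariant_under_equivalence_general Ω φ ψ hequiv hA1Ω
end
end

section
/- Let Ω ⊆ ℝⁿ be open, let D ⊆ Ω be dense in Ω, and let φ ∈ Φ_w(Ω) satisfy (A1)_Ω with constant β ∈ (0,1]. Then for every x ∈ Ω and every t > 1, β φ⁻¹(x,t) ≤ inf_{y ∈ D} β^{−|x−y| t^{1/n}} φ⁻¹(y,t) ≤ (1/β) φ⁻¹(x,t). -/
open MeasureTheory ENNReal Metric Set Filter NNReal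

noncomputable section

/-!
Both bounds are (A1)_Ω itself, multiplied by a power of `β`. With `s = |x−y| t^(1/n)`, applying it
to `(y, x)` gives `β φ⁻¹(x,t) ≤ β^(−s) φ⁻¹(y,t)` for every `y ∈ Ω`. Applying it to `(x, y)` gives
`β^(−s) φ⁻¹(y,t) ≤ β^(−2s−1) φ⁻¹(x,t)`, and the right-hand side is continuous in `y` with value
`β⁻¹ φ⁻¹(x,t)` at `y = x`, which lies in the closure of `D`.
-/

theorem biInf_le_of_mem_closure {X α : Type*} [TopologicalSpace X] [CompleteLinearOrder α]
    [TopologicalSpace α] [OrderClosedTopology α] {D : Set X} {f : X → α} {x : X}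
    (hx : x ∈ closure D) (hf : ContinuousAt f x) : ⨅ y ∈ D, f y ≤ f x := by
  have hD : f '' D ⊆ Ici (⨅ y ∈ D, f y) := image_subset_iff.2 fun y hy => iInf₂_le y hy
  exact isClosed_Ici.closure_subset_iff.2 hD (mem_closure_image hf hx)

theorem ofReal_rpow_mul_ofReal_rpow_mul {β : ℝ} (hβ : 0 < β) (a b : ℝ) (u : ℝ≥0∞) :
    ENNReal.ofReal (β ^ a) * (ENNReal.ofReal (β ^ b) * u) = ENNReal.ofReal (β ^ (a + b)) * u := by
  rw [← mul_assoc, ← ENNReal.ofReal_mul (Real.rpow_nonneg hβ.le a), ← Real.rpow_add hβ]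

namespace A1OmegaWith

variable {n : ℕ} {β : ℝ} {Ω : Set (En n)} {φ : En n → ℝ≥0 → ℝ≥0∞} {x y : En n} {t : ℝ}

theorem mul_leftInv_le (h : A1OmegaWith β Ω φ) (hβ : 0 < β) (hx : x ∈ Ω) (hy : y ∈ Ω)
    (ht : 1 ≤ t) :
    ENNReal.ofReal β * leftInv (φ x) (ENNReal.ofReal t) ≤
      ENNReal.ofReal (β ^ (-(dist x y * t ^ ((1 : ℝ) / n)))) *
        leftInv (φ y) (ENNReal.ofReal t) := by
  set s := dist x y * t ^ ((1 : ℝ) / n)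
  calc ENNReal.ofReal β * leftInv (φ x) (ENNReal.ofReal t)
      = ENNReal.ofReal (β ^ (-s)) *
          (ENNReal.ofReal (β ^ (dist y x * t ^ ((1 : ℝ) / n) + 1)) *
            leftInv (φ x) (ENNReal.ofReal t)) := by
        rw [ofReal_rpow_mul_ofReal_rpow_mul hβ, dist_comm y x, neg_add_cancel_left,
          Real.rpow_one]
    _ ≤ ENNReal.ofReal (β ^ (-s)) * leftInv (φ y) (ENNReal.ofReal t) :=
        mul_le_mul_right (h y hy x hx t ht) _

theorem rpow_mul_leftInv_le (h : A1OmegaWith β Ω φ) (hβ : 0 < β) (hx : x ∈ Ω) (hy : y ∈ Ω)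
    (ht : 1 ≤ t) :
    ENNReal.ofReal (β ^ (-(dist x y * t ^ ((1 : ℝ) / n)))) * leftInv (φ y) (ENNReal.ofReal t) ≤
      ENNReal.ofReal (β ^ (-(2 * (dist x y * t ^ ((1 : ℝ) / n)) + 1))) *
        leftInv (φ x) (ENNReal.ofReal t) := by
  set s := dist x y * t ^ ((1 : ℝ) / n)
  calc ENNReal.ofReal (β ^ (-s)) * leftInv (φ y) (ENNReal.ofReal t)
      = ENNReal.ofReal (β ^ (-(2 * s + 1))) *
          (ENNReal.ofReal (β ^ (s + 1)) * leftInv (φ y) (ENNReal.ofReal t)) := by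
        rw [ofReal_rpow_mul_ofReal_rpow_mul hβ]
        ring_nf
    _ ≤ ENNReal.ofReal (β ^ (-(2 * s + 1))) * leftInv (φ x) (ENNReal.ofReal t) :=
        mul_le_mul_right (h x hx y hy t ht) _

end A1OmegaWith

theorem inf_comparable_on_dense_general {n : ℕ} (Ω D : Set (En n))
    (hDΩ : D ⊆ Ω) (hdense : Ω ⊆ closure D)
    (φ : En n → ℝ≥0 → ℝ≥0∞)
    (β : ℝ) (hβ0 : 0 < β) (hA1Ω : A1OmegaWith β Ω φ) :
    ∀ x ∈ Ω, ∀ t : ℝ, 1 < t →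
      ENNReal.ofReal β * leftInv (φ x) (ENNReal.ofReal t) ≤
        (⨅ y ∈ D, ENNReal.ofReal (β ^ (-(dist x y * t ^ ((1 : ℝ) / n)))) *
          leftInv (φ y) (ENNReal.ofReal t)) ∧
      (⨅ y ∈ D, ENNReal.ofReal (β ^ (-(dist x y * t ^ ((1 : ℝ) / n)))) *
          leftInv (φ y) (ENNReal.ofReal t)) ≤
        ENNReal.ofReal (1 / β) * leftInv (φ x) (ENNReal.ofReal t) := by
  intro x hx t ht
  refine ⟨le_iInf₂ fun y hy => hA1Ω.mul_leftInv_le hβ0 hx (hDΩ hy) ht.le, ?_⟩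
  set bound : En n → ℝ≥0∞ := fun y =>
    ENNReal.ofReal (β ^ (-(2 * (dist x y * t ^ ((1 : ℝ) / n)) + 1))) *
      leftInv (φ x) (ENNReal.ofReal t)
  have hbound_x : bound x = ENNReal.ofReal (1 / β) * leftInv (φ x) (ENNReal.ofReal t) := by
    simp [bound, Real.rpow_neg_one]
  have hbound_cont : ContinuousAt bound x := by
    refine ENNReal.Tendsto.mul_const (ENNReal.continuous_ofReal.continuousAt.comp ?_) ?_
    · exact (Real.continuousAt_const_rpow hβ0.ne').comp (by fun_prop)
    · exact Or.inl (ENNReal.ofReal_pos.2 (Real.rpow_pos_of_pos hβ0 _)).ne'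
  calc (⨅ y ∈ D, ENNReal.ofReal (β ^ (-(dist x y * t ^ ((1 : ℝ) / n)))) *
          leftInv (φ y) (ENNReal.ofReal t))
      ≤ ⨅ y ∈ D, bound y :=
        iInf₂_mono fun y hy => hA1Ω.rpow_mul_leftInv_le hβ0 hx (hDΩ hy) ht.le
    _ ≤ bound x := biInf_le_of_mem_closure (hdense hx) hbound_cont
    _ = ENNReal.ofReal (1 / β) * leftInv (φ x) (ENNReal.ofReal t) := hbound_x

/-- for `Ω` open, `D ⊆ Ω` dense in `Ω` and `φ` satisfying (A1)_Ω with
constant `β`, for every `x ∈ Ω` and `t > 1`,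
`β φ⁻¹(x,t) ≤ inf_{y ∈ D} β^(−|x−y| t^(1/n)) φ⁻¹(y,t) ≤ (1/β) φ⁻¹(x,t)`. -/
theorem inf_comparable_on_dense {n : ℕ} (Ω D : Set (En n)) (hΩ : IsOpen Ω)
    (hDΩ : D ⊆ Ω) (hdense : Ω ⊆ closure D)
    (φ : En n → ℝ≥0 → ℝ≥0∞) (hφ : IsGenWeakPhi Ω φ)
    (β : ℝ) (hβ0 : 0 < β) (hβ1 : β ≤ 1) (hA1Ω : A1OmegaWith β Ω φ) :
    ∀ x ∈ Ω, ∀ t : ℝ, 1 < t →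
      ENNReal.ofReal β * leftInv (φ x) (ENNReal.ofReal t) ≤
        (⨅ y ∈ D, ENNReal.ofReal (β ^ (-(dist x y * t ^ ((1 : ℝ) / n)))) *
          leftInv (φ y) (ENNReal.ofReal t)) ∧
      (⨅ y ∈ D, ENNReal.ofReal (β ^ (-(dist x y * t ^ ((1 : ℝ) / n)))) *
          leftInv (φ y) (ENNReal.ofReal t)) ≤
        ENNReal.ofReal (1 / β) * leftInv (φ x) (ENNReal.ofReal t) :=
  inf_comparable_on_dense_general Ω D hDΩ hdense φ β hβ0 hA1Ω
end
end
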